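/- arXiv:1810.08152 — 3 statements merged into one kernel-verified Lean document; each statement's English description precedes it below -/
import Mathlib

section
/- Assume V⁺ admits a monomial parametrization with exponent matrix A (data p, A, K, ψ) and that the cone generator matrix E has no zero row. Suppose there exist nonzero vectors μ ∈ rs(A) and z ∈ im(S) with sign(μ) = sign(z). For any choice of positive numbers ā_i (for indices i with z_i = 0), define a ∈ ℝ^n by a_i = z_i/(e^{μ_i} − 1) if z_i ≠ 0 and a_i = ā_i if z_i = 0; set b = a⋆e^μ (exponential componentwise); and for any λ ∈ Λ(E) set k_j = (Eλ)_j/φ(a)_j for j = 1,…,r. Then a, b ∈ ℝ_{>0}^n with a ≠ b, k ∈ ℝ_{>0}^r, (k,a) ∈ V⁺, (k,b) ∈ V⁺, and b − a = z ∈ im(S) (equivalently Z(b − a) = 0); in particular the network admits multistationarity. -/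
/-!
Choosing `a i = z i / (exp (μ i) - 1)` makes `b - a = z` for `b = a ⋆ exp μ`, and the sign
condition makes `a` positive. The rate constants `k = Eλ / φ(a)` put `(k, a)` on `V⁺`. Since
`μ ∈ rs(A)`, the vector `exp μ` is of the form `η^A` with `η > 0`, so the monomial
parametrization carries `(k, a)` to `(k, a ⋆ exp μ) = (k, b)`. Finally `b - a = z ∈ im(S)` is
annihilated by the conservation matrix.
-/

open Matrix

noncomputable section

/-- The monomial map φ: `phi Y x j = ∏ i, x i ^ Y i j`. -/
def phi {n r : ℕ} (Y : Matrix (Fin n) (Fin r) ℕ) (x : Fin n → ℝ) : Fin r → ℝ :=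
  fun j => ∏ i, x i ^ Y i j

/-- The positive steady state variety V⁺. -/
def Vplus {n r : ℕ} (Y : Matrix (Fin n) (Fin r) ℕ) (S : Matrix (Fin n) (Fin r) ℝ) :
    Set ((Fin r → ℝ) × (Fin n → ℝ)) :=
  {p | (∀ j, 0 < p.1 j) ∧ (∀ i, 0 < p.2 i) ∧
    S.mulVec (fun j => p.1 j * phi Y p.2 j) = 0}

/-- `E` is a cone generator matrix for `S`:
`E` is nonnegative and `ker S ∩ ℝ_{≥0}^r = {Eλ : λ ≥ 0}`. -/
def IsConeGenMatrix {n r d : ℕ} (S : Matrix (Fin n) (Fin r) ℝ)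
    (E : Matrix (Fin r) (Fin d) ℝ) : Prop :=
  (∀ j l, 0 ≤ E j l) ∧
  {v : Fin r → ℝ | S.mulVec v = 0 ∧ ∀ j, 0 ≤ v j} =
    {v : Fin r → ℝ | ∃ lam : Fin d → ℝ, (∀ l, 0 ≤ lam l) ∧ v = E.mulVec lam}

/-- The coefficient cone Λ(E). -/
def Lambda {r d : ℕ} (E : Matrix (Fin r) (Fin d) ℝ) : Set (Fin d → ℝ) :=
  {lam | (∀ l, 0 ≤ lam l) ∧ ∀ j, 0 < E.mulVec lam j}

/-- `ξ^B`: for a rational `q × m` matrix `B`, `(ξ^B) j = ∏ i, ξ i ^ (B i j)` (real powers). -/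
def vecPow {q m : ℕ} (ξ : Fin q → ℝ) (B : Matrix (Fin q) (Fin m) ℚ) : Fin m → ℝ :=
  fun j => ∏ i, ξ i ^ ((B i j : ℝ))

/-- V⁺ admits a monomial parametrization with exponent matrix `A` (data `p`, `A`, `K`, `ψ`). -/
def IsMonomialParamExp {n r : ℕ} (Y : Matrix (Fin n) (Fin r) ℕ)
    (S : Matrix (Fin n) (Fin r) ℝ) (p : ℕ) (A : Matrix (Fin (n - p)) (Fin n) ℚ)
    (K : Set (Fin r → ℝ)) (ψ : (Fin r → ℝ) → (Fin n → ℝ)) : Prop :=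
  p < n ∧ A.rank = n - p ∧ (∀ k ∈ K, ∀ j, 0 < k j) ∧ (∀ k ∈ K, ∀ i, 0 < ψ k i) ∧
  ∀ k x, (∀ j : Fin r, 0 < k j) → (∀ i : Fin n, 0 < x i) →
    ((k, x) ∈ Vplus Y S ↔ k ∈ K ∧
      ∃ ξ : Fin (n - p) → ℝ, (∀ l, 0 < ξ l) ∧ x = fun i => ψ k i * vecPow ξ A i)

/-- `Z` is a conservation matrix for `S` (with `s = rank S`):
its rows form a basis of the left kernel of `S`. -/
def IsConservationMatrix {n r : ℕ} (S : Matrix (Fin n) (Fin r) ℝ) (s : ℕ)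
    (Z : Matrix (Fin (n - s)) (Fin n) ℝ) : Prop :=
  S.rank = s ∧ s < n ∧ LinearIndependent ℝ (fun i => Z i) ∧
    Submodule.span ℝ (Set.range (fun i => Z i)) = LinearMap.ker S.vecMulLinear

/-- `im₊(Z) = {Zx : x ≥ 0}`. -/
def imPos {m n : ℕ} (Z : Matrix (Fin m) (Fin n) ℝ) : Set (Fin m → ℝ) :=
  {c | ∃ x : Fin n → ℝ, (∀ i, 0 ≤ x i) ∧ c = Z.mulVec x}

/-- The real row space of a rational matrix. -/
def rowSpace {q m : ℕ} (A : Matrix (Fin q) (Fin m) ℚ) : Submodule ℝ (Fin m → ℝ) :=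
  Submodule.span ℝ (Set.range (fun l => fun i => ((A l i : ℝ))))

/-- The column space (image) of `S`. -/
def colSpace {n r : ℕ} (S : Matrix (Fin n) (Fin r) ℝ) : Submodule ℝ (Fin n → ℝ) :=
  LinearMap.range S.mulVecLin

/-- Componentwise sign of a vector. -/
def signVec {m : ℕ} (v : Fin m → ℝ) : Fin m → ℝ := fun i => Real.sign (v i)

theorem Real.sign_exp_sub_one (x : ℝ) : Real.sign (Real.exp x - 1) = Real.sign x := by
  rcases lt_trichotomy x 0 with hx | rfl | hx
  · rw [Real.sign_of_neg hx, Real.sign_of_neg (by linarith [Real.exp_lt_one_iff.2 hx])]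
  · simp
  · rw [Real.sign_of_pos hx, Real.sign_of_pos (by linarith [Real.one_lt_exp_iff.2 hx])]

theorem div_pos_of_sign_eq {w v : ℝ} (h : Real.sign w = Real.sign v) (hw : w ≠ 0) :
    0 < w / v := by
  rcases hw.lt_or_gt with hw | hw <;> rcases lt_trichotomy v 0 with hv | rfl | hv <;>
    (simp_all [Real.sign_of_neg, Real.sign_of_pos, div_pos_of_neg_of_neg]) <;> linarith

theorem div_exp_sub_one_pos {m w : ℝ} (h : Real.sign m = Real.sign w) (hw : w ≠ 0) :
    0 < w / (Real.exp m - 1) :=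
  div_pos_of_sign_eq (by rw [Real.sign_exp_sub_one, h]) hw

theorem div_exp_sub_one_mul_exp_sub {m : ℝ} (hm : m ≠ 0) (w : ℝ) :
    w / (Real.exp m - 1) * Real.exp m - w / (Real.exp m - 1) = w := by
  have hne : Real.exp m - 1 ≠ 0 := sub_ne_zero.2 ((Real.exp_eq_one_iff m).not.2 hm)
  field_simp

theorem phi_pos {n r : ℕ} (Y : Matrix (Fin n) (Fin r) ℕ) {x : Fin n → ℝ}
    (hx : ∀ i, 0 < x i) (j : Fin r) : 0 < phi Y x j :=
  Finset.prod_pos fun i _ => pow_pos (hx i) _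

theorem vecPow_mul {q m : ℕ} {ξ η : Fin q → ℝ} (hξ : ∀ l, 0 < ξ l) (hη : ∀ l, 0 < η l)
    (B : Matrix (Fin q) (Fin m) ℚ) :
    vecPow (fun l => ξ l * η l) B = fun i => vecPow ξ B i * vecPow η B i := by
  funext i
  rw [vecPow, vecPow, vecPow, ← Finset.prod_mul_distrib]
  exact Finset.prod_congr rfl fun l _ => Real.mul_rpow (hξ l).le (hη l).le

theorem exists_vecPow_eq_exp_of_mem_rowSpace {q m : ℕ} {B : Matrix (Fin q) (Fin m) ℚ}
    {μ : Fin m → ℝ} (hμ : μ ∈ rowSpace B) :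
    ∃ η : Fin q → ℝ, (∀ l, 0 < η l) ∧ vecPow η B = fun i => Real.exp (μ i) := by
  obtain ⟨c, rfl⟩ := (Submodule.mem_span_range_iff_exists_fun ℝ).1 hμ
  refine ⟨fun l => Real.exp (c l), fun l => Real.exp_pos _, funext fun i => ?_⟩
  simp only [vecPow, Finset.sum_apply, Pi.smul_apply, smul_eq_mul, Real.exp_sum]
  exact Finset.prod_congr rfl fun l _ => (Real.exp_mul _ _).symm

theorem IsMonomialParamExp.mul_exp_mem_Vplus {n r p : ℕ} {Y : Matrix (Fin n) (Fin r) ℕ}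
    {S : Matrix (Fin n) (Fin r) ℝ} {A : Matrix (Fin (n - p)) (Fin n) ℚ} {K : Set (Fin r → ℝ)}
    {ψ : (Fin r → ℝ) → (Fin n → ℝ)} (hparam : IsMonomialParamExp Y S p A K ψ)
    {k : Fin r → ℝ} {x μ : Fin n → ℝ} (hx : (k, x) ∈ Vplus Y S) (hμ : μ ∈ rowSpace A) :
    (k, fun i => x i * Real.exp (μ i)) ∈ Vplus Y S := by
  have hiff := hparam.2.2.2.2
  obtain ⟨hK, ξ, hξ, rfl⟩ := (hiff k x hx.1 hx.2.1).1 hx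
  obtain ⟨η, hη, hημ⟩ := exists_vecPow_eq_exp_of_mem_rowSpace hμ
  refine (hiff k _ hx.1 fun i => mul_pos (hx.2.1 i) (Real.exp_pos _)).2
    ⟨hK, fun l => ξ l * η l, fun l => mul_pos (hξ l) (hη l), ?_⟩
  rw [vecPow_mul hξ hη, hημ]
  funext i
  ring

theorem IsConeGenMatrix.mulVec_mulVec_eq_zero {n r d : ℕ} {S : Matrix (Fin n) (Fin r) ℝ}
    {E : Matrix (Fin r) (Fin d) ℝ} (hE : IsConeGenMatrix S E) {lam : Fin d → ℝ}
    (hlam : ∀ l, 0 ≤ lam l) : S *ᵥ (E *ᵥ lam) = 0 := by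
  have hmem : E *ᵥ lam ∈ {v : Fin r → ℝ | S *ᵥ v = 0 ∧ ∀ j, 0 ≤ v j} :=
    hE.2 ▸ ⟨lam, hlam, rfl⟩
  exact hmem.1

theorem IsConservationMatrix.mulVec_eq_zero_of_mem_colSpace {n r s : ℕ}
    {S : Matrix (Fin n) (Fin r) ℝ} {Z : Matrix (Fin (n - s)) (Fin n) ℝ}
    (hZ : IsConservationMatrix S s Z) {z : Fin n → ℝ} (hz : z ∈ colSpace S) : Z *ᵥ z = 0 := by
  have hZS : Z * S = 0 := by
    ext l j
    have hl : Z l ∈ LinearMap.ker S.vecMulLinear := hZ.2.2.2 ▸ Submodule.subset_span ⟨l, rfl⟩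
    exact congrFun (LinearMap.mem_ker.1 hl) j
  obtain ⟨x, rfl⟩ := hz
  change Z *ᵥ (S *ᵥ x) = 0
  rw [mulVec_mulVec, hZS, zero_mulVec]

theorem div_phi_mem_Vplus {n r : ℕ} {Y : Matrix (Fin n) (Fin r) ℕ}
    {S : Matrix (Fin n) (Fin r) ℝ} {x : Fin n → ℝ} {v : Fin r → ℝ} (hx : ∀ i, 0 < x i)
    (hv : ∀ j, 0 < v j) (hSv : S *ᵥ v = 0) : (fun j => v j / phi Y x j, x) ∈ Vplus Y S := by
  refine ⟨fun j => div_pos (hv j) (phi_pos Y hx j), hx, ?_⟩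
  convert hSv using 2
  funext j
  exact div_mul_cancel₀ _ (phi_pos Y hx j).ne'

theorem multistationarity_of_sign_pattern_general {n r d s p : ℕ}
    (Y : Matrix (Fin n) (Fin r) ℕ) (S : Matrix (Fin n) (Fin r) ℝ)
    (A : Matrix (Fin (n - p)) (Fin n) ℚ) (K : Set (Fin r → ℝ))
    (ψ : (Fin r → ℝ) → (Fin n → ℝ)) (hparam : IsMonomialParamExp Y S p A K ψ)
    (E : Matrix (Fin r) (Fin d) ℝ) (hE : IsConeGenMatrix S E)
    (Z : Matrix (Fin (n - s)) (Fin n) ℝ) (hZ : IsConservationMatrix S s Z)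
    (μ z : Fin n → ℝ) (hμ : μ ∈ rowSpace A) (hz : z ∈ colSpace S)
    (hz0 : z ≠ 0)
    (hsign : ∀ i, Real.sign (μ i) = Real.sign (z i))
    (abar : Fin n → ℝ) (habar : ∀ i, z i = 0 → 0 < abar i)
    (a b : Fin n → ℝ)
    (ha : a = fun i => if z i = 0 then abar i else z i / (Real.exp (μ i) - 1))
    (hb : b = fun i => a i * Real.exp (μ i))
    (lam : Fin d → ℝ) (hlam : lam ∈ Lambda E)
    (k : Fin r → ℝ) (hk : k = fun j => E.mulVec lam j / phi Y a j) :
    (∀ i, 0 < a i) ∧ (∀ i, 0 < b i) ∧ a ≠ b ∧ (∀ j, 0 < k j) ∧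
    (k, a) ∈ Vplus Y S ∧ (k, b) ∈ Vplus Y S ∧
    b - a = z ∧ (b - a) ∈ colSpace S ∧ Z.mulVec (b - a) = 0 ∧
    (∃ k' : Fin r → ℝ, (∀ j, 0 < k' j) ∧ ∃ a' b' : Fin n → ℝ, a' ≠ b' ∧
      (k', a') ∈ Vplus Y S ∧ (k', b') ∈ Vplus Y S ∧
      Z.mulVec a' = Z.mulVec b') := by
  have hμz : ∀ i, μ i = 0 ↔ z i = 0 := fun i => by
    rw [← Real.sign_eq_zero_iff, hsign, Real.sign_eq_zero_iff]
  have hapos : ∀ i, 0 < a i := fun i => by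
    rw [ha]
    dsimp only
    split_ifs with hzi
    exacts [habar i hzi, div_exp_sub_one_pos (hsign i) hzi]
  have hba : b - a = z := funext fun i => by
    rw [hb, Pi.sub_apply]
    by_cases hzi : z i = 0
    · rw [(hμz i).2 hzi, Real.exp_zero, mul_one, sub_self, hzi]
    · rw [ha]
      simp only [hzi, if_false]
      exact div_exp_sub_one_mul_exp_sub ((hμz i).not.2 hzi) _
  have hka : (k, a) ∈ Vplus Y S :=
    hk ▸ div_phi_mem_Vplus hapos hlam.2 (hE.mulVec_mulVec_eq_zero hlam.1)
  have hkb : (k, b) ∈ Vplus Y S := hb ▸ hparam.mul_exp_mem_Vplus hka hμ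
  have hZba : Z *ᵥ (b - a) = 0 := hba ▸ hZ.mulVec_eq_zero_of_mem_colSpace hz
  have hab : a ≠ b := fun h => hz0 (by rw [← hba, h, sub_self])
  refine ⟨hapos, hkb.2.1, hab, hka.1, hka, hkb, hba, hba ▸ hz, hZba,
    k, hka.1, a, b, hab, hka, hkb, ?_⟩
  rw [mulVec_sub, sub_eq_zero] at hZba
  exact hZba.symm

/-- from a pair μ ∈ rs(A), z ∈ im(S) with equal sign patterns one constructs
rate constants k and two distinct positive steady states a, b with b − a = z;
in particular the network admits multistationarity. -/
theorem multistationarity_of_sign_pattern {n r d s p : ℕ} (hn : 1 ≤ n) (hr : 1 ≤ r)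
    (Y : Matrix (Fin n) (Fin r) ℕ) (S : Matrix (Fin n) (Fin r) ℝ)
    (A : Matrix (Fin (n - p)) (Fin n) ℚ) (K : Set (Fin r → ℝ))
    (ψ : (Fin r → ℝ) → (Fin n → ℝ)) (hparam : IsMonomialParamExp Y S p A K ψ)
    (E : Matrix (Fin r) (Fin d) ℝ) (hE : IsConeGenMatrix S E)
    (hrow : ∀ j, ∃ l, E j l ≠ 0)
    (Z : Matrix (Fin (n - s)) (Fin n) ℝ) (hZ : IsConservationMatrix S s Z)
    (μ z : Fin n → ℝ) (hμ : μ ∈ rowSpace A) (hz : z ∈ colSpace S)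
    (hμ0 : μ ≠ 0) (hz0 : z ≠ 0)
    (hsign : ∀ i, Real.sign (μ i) = Real.sign (z i))
    (abar : Fin n → ℝ) (habar : ∀ i, z i = 0 → 0 < abar i)
    (a b : Fin n → ℝ)
    (ha : a = fun i => if z i = 0 then abar i else z i / (Real.exp (μ i) - 1))
    (hb : b = fun i => a i * Real.exp (μ i))
    (lam : Fin d → ℝ) (hlam : lam ∈ Lambda E)
    (k : Fin r → ℝ) (hk : k = fun j => E.mulVec lam j / phi Y a j) :
    (∀ i, 0 < a i) ∧ (∀ i, 0 < b i) ∧ a ≠ b ∧ (∀ j, 0 < k j) ∧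
    (k, a) ∈ Vplus Y S ∧ (k, b) ∈ Vplus Y S ∧
    b - a = z ∧ (b - a) ∈ colSpace S ∧ Z.mulVec (b - a) = 0 ∧
    (∃ k' : Fin r → ℝ, (∀ j, 0 < k' j) ∧ ∃ a' b' : Fin n → ℝ, a' ≠ b' ∧
      (k', a') ∈ Vplus Y S ∧ (k', b') ∈ Vplus Y S ∧
      Z.mulVec a' = Z.mulVec b') :=
  multistationarity_of_sign_pattern_general Y S A K ψ hparam E hE Z hZ μ z hμ hz hz0 hsign abar
    habar a b ha hb lam hlam k hk
end
end

section
/- Assume V⁺ admits a monomial parametrization with exponent matrix A (data p, A, K, ψ) and that the cone generator matrix E has no zero row. Then there exist k ∈ K and distinct a, b ∈ ℝ_{>0}^n with (k,a) ∈ V⁺, (k,b) ∈ V⁺ and Z(b − a) = 0, if and only if sign(rs(A)) ∩ sign(im(S)) ≠ {0}. -/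
open Matrix

noncomputable section

/-!
Fix `k`. Through the parametrization `x = ψ(k) ⋆ ξ^A`, two positive steady states `a`, `b` for
`k` are related by `b = a ⋆ exp u` with `u ∈ rs(A)`, and conversely every such `b` is again a
steady state for `k`. As `a > 0`, `sign (b - a) = sign u`, and `Z (b - a) = 0` says
`b - a ∈ ker Z = im S`. Conversely, given `u ∈ rs(A)` and `w ∈ im S` with equal nonzero sign
vectors, `a_i = w_i / (exp u_i - 1)` (and `a_i = 1` where `u_i = 0`) is positive and
`b = a ⋆ exp u` satisfies `b - a = w`; rate constants making `a` a steady state come from a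
positive vector of `ker S`, which exists because `E` has no zero row.
-/

namespace Real

theorem sign_mul_of_pos {c : ℝ} (hc : 0 < c) (x : ℝ) : sign (c * x) = sign x := by
  rcases lt_trichotomy x 0 with h | rfl | h
  · rw [sign_of_neg h, sign_of_neg (mul_neg_of_pos_of_neg hc h)]
  · simp
  · rw [sign_of_pos h, sign_of_pos (mul_pos hc h)]

theorem sign_sub_of_strictMono {f : ℝ → ℝ} (hf : StrictMono f) (x y : ℝ) :
    sign (f y - f x) = sign (y - x) := by
  rcases lt_trichotomy y x with h | rfl | h
  · rw [sign_of_neg (sub_neg.2 (hf h)), sign_of_neg (sub_neg.2 h)]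
  · simp
  · rw [sign_of_pos (sub_pos.2 (hf h)), sign_of_pos (sub_pos.2 h)]

theorem sign_exp_sub_one_s10 (u : ℝ) : sign (exp u - 1) = sign u := by
  simpa using sign_sub_of_strictMono exp_strictMono 0 u

theorem div_pos_of_sign_eq {x y : ℝ} (h : sign x = sign y) (hy : y ≠ 0) : 0 < x / y := by
  rcases lt_trichotomy x 0 with hx | rfl | hx <;>
    rcases hy.lt_or_gt with hy | hy <;>
    simp_all [sign_of_neg, sign_of_pos, div_pos_of_neg_of_neg] <;> norm_num at h

theorem exists_pos_mul_exp_sub_one_eq {u w : ℝ} (h : sign w = sign u) :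
    ∃ a, 0 < a ∧ a * (exp u - 1) = w := by
  by_cases hu : u = 0
  · rw [hu, sign_zero, sign_eq_zero_iff] at h
    exact ⟨1, one_pos, by simp [hu, h]⟩
  · have hexp : exp u - 1 ≠ 0 := sub_ne_zero.2 fun h1 => hu (exp_eq_one_iff u |>.1 h1)
    refine ⟨w / (exp u - 1), div_pos_of_sign_eq (by rw [h, sign_exp_sub_one_s10]) hexp, ?_⟩
    exact div_mul_cancel₀ w hexp

end Real

theorem signVec_eq_zero_iff {m : ℕ} {u : Fin m → ℝ} : signVec u = 0 ↔ u = 0 := by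
  simp [funext_iff, signVec, Real.sign_eq_zero_iff]

theorem signVec_inter_ne_zero_iff {m : ℕ} {P Q : Submodule ℝ (Fin m → ℝ)} :
    {σ : Fin m → ℝ | ∃ u ∈ P, σ = signVec u} ∩ {σ : Fin m → ℝ | ∃ u ∈ Q, σ = signVec u} ≠
        {fun _ => 0} ↔
      ∃ u ∈ P, ∃ w ∈ Q, signVec u = signVec w ∧ u ≠ 0 := by
  have hzero : signVec (0 : Fin m → ℝ) = 0 := signVec_eq_zero_iff.2 rfl
  constructor
  · intro h
    by_contra! hcon
    refine h (Set.eq_singleton_iff_unique_mem.2 ⟨⟨⟨0, P.zero_mem, hzero.symm⟩,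
      ⟨0, Q.zero_mem, hzero.symm⟩⟩, ?_⟩)
    rintro _ ⟨⟨u, hu, rfl⟩, w, hw, huw⟩
    rw [hcon u hu w hw huw]
    exact hzero
  · rintro ⟨u, hu, w, hw, huw, hu0⟩ h
    have hmem : signVec u ∈ ({fun _ => 0} : Set (Fin m → ℝ)) :=
      h ▸ ⟨⟨u, hu, rfl⟩, w, hw, huw⟩
    exact hu0 (signVec_eq_zero_iff.1 hmem)

theorem mem_rowSpace_iff {q m : ℕ} {A : Matrix (Fin q) (Fin m) ℚ} {u : Fin m → ℝ} :
    u ∈ rowSpace A ↔ ∃ v, v ᵥ* A.map (↑) = u := by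
  rw [show rowSpace A = LinearMap.range (A.map ((↑) : ℚ → ℝ)).vecMulLinear from
    (range_vecMulLinear _).symm]
  rfl

theorem vecPow_mul_exp {q m : ℕ} {ξ : Fin q → ℝ} (hξ : ∀ l, 0 < ξ l) (v : Fin q → ℝ)
    (A : Matrix (Fin q) (Fin m) ℚ) (i : Fin m) :
    vecPow (fun l => ξ l * Real.exp (v l)) A i =
      vecPow ξ A i * Real.exp ((v ᵥ* A.map (↑)) i) := by
  simp only [vecPow, Real.mul_rpow (hξ _).le (Real.exp_pos _).le, ← Real.exp_mul,
    Finset.prod_mul_distrib, ← Real.exp_sum]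
  rfl

theorem IsConservationMatrix.mulVec_eq_zero_iff {n r s : ℕ} {S : Matrix (Fin n) (Fin r) ℝ}
    {Z : Matrix (Fin (n - s)) (Fin n) ℝ} (hZ : IsConservationMatrix S s Z) (x : Fin n → ℝ) :
    Z *ᵥ x = 0 ↔ x ∈ colSpace S := by
  obtain ⟨hSrank, -, hli, hspan⟩ := hZ
  have hZS : Z * S = 0 := by
    ext i j
    have hi : Z i ∈ LinearMap.ker S.vecMulLinear := hspan ▸ Submodule.subset_span ⟨i, rfl⟩
    exact congrFun (LinearMap.mem_ker.1 hi) j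
  have hle : colSpace S ≤ LinearMap.ker Z.mulVecLin := by
    rintro _ ⟨x, rfl⟩
    simp [Matrix.mulVec_mulVec, hZS]
  have hZrank : Z.rank = n - s := by simpa using hli.rank_matrix
  have hker := LinearMap.finrank_range_add_finrank_ker Z.mulVecLin
  rw [Module.finrank_fin_fun] at hker
  -- both have dimension `s`, since the `n - s` rows of `Z` are independent
  have heq : colSpace S = LinearMap.ker Z.mulVecLin := by
    refine Submodule.eq_of_le_of_finrank_le hle ?_
    change _ ≤ S.rank
    change Z.rank + _ = n at hker
    omega
  rw [heq]
  rfl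

theorem IsConeGenMatrix.exists_pos_mem_ker {n r d : ℕ} {S : Matrix (Fin n) (Fin r) ℝ}
    {E : Matrix (Fin r) (Fin d) ℝ} (hE : IsConeGenMatrix S E) (hrow : ∀ j, ∃ l, E j l ≠ 0) :
    ∃ v, S *ᵥ v = 0 ∧ ∀ j, 0 < v j := by
  have hker : E *ᵥ (fun _ => 1) ∈ {v : Fin r → ℝ | S *ᵥ v = 0 ∧ ∀ j, 0 ≤ v j} :=
    hE.2 ▸ ⟨fun _ => 1, fun _ => zero_le_one, rfl⟩
  refine ⟨_, hker.1, fun j => ?_⟩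
  obtain ⟨l, hl⟩ := hrow j
  simpa [Matrix.mulVec, dotProduct] using
    Finset.sum_pos' (fun l _ => hE.1 j l) ⟨l, Finset.mem_univ l, (hE.1 j l).lt_of_ne' hl⟩

theorem exists_mem_Vplus_of_pos_mem_ker {n r : ℕ} (Y : Matrix (Fin n) (Fin r) ℕ)
    {S : Matrix (Fin n) (Fin r) ℝ} {v : Fin r → ℝ} (hv : S *ᵥ v = 0) (hvpos : ∀ j, 0 < v j)
    {x : Fin n → ℝ} (hx : ∀ i, 0 < x i) : ∃ k, (k, x) ∈ Vplus Y S := by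
  have hphi (j : Fin r) : 0 < phi Y x j := Finset.prod_pos fun i _ => pow_pos (hx i) _
  refine ⟨fun j => v j / phi Y x j, fun j => div_pos (hvpos j) (hphi j), hx, ?_⟩
  convert hv using 2
  exact funext fun j => div_mul_cancel₀ _ (hphi j).ne'

namespace IsMonomialParamExp

variable {n r p : ℕ} {Y : Matrix (Fin n) (Fin r) ℕ} {S : Matrix (Fin n) (Fin r) ℝ}
  {A : Matrix (Fin (n - p)) (Fin n) ℚ} {K : Set (Fin r → ℝ)} {ψ : (Fin r → ℝ) → (Fin n → ℝ)}

theorem mem_of_mem_Vplus (h : IsMonomialParamExp Y S p A K ψ) {k : Fin r → ℝ}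
    {x : Fin n → ℝ} (hx : (k, x) ∈ Vplus Y S) : k ∈ K :=
  ((h.2.2.2.2 k x hx.1 hx.2.1).1 hx).1

theorem mem_Vplus_iff (h : IsMonomialParamExp Y S p A K ψ) {k : Fin r → ℝ}
    {a b : Fin n → ℝ} (ha : (k, a) ∈ Vplus Y S) (hb : ∀ i, 0 < b i) :
    (k, b) ∈ Vplus Y S ↔ ∃ u ∈ rowSpace A, b = fun i => a i * Real.exp (u i) := by
  obtain ⟨-, -, -, -, hiff⟩ := h
  obtain ⟨hkK, ξ, hξ, rfl⟩ := (hiff k a ha.1 ha.2.1).1 ha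
  rw [hiff k b ha.1 hb]
  constructor
  · rintro ⟨-, η, hη, rfl⟩
    have hηξ : η = fun l => ξ l * Real.exp (Real.log (η l) - Real.log (ξ l)) := by
      funext l
      rw [Real.exp_sub, Real.exp_log (hη l), Real.exp_log (hξ l), mul_div_cancel₀ _ (hξ l).ne']
    refine ⟨_, mem_rowSpace_iff.2 ⟨fun l => Real.log (η l) - Real.log (ξ l), rfl⟩,
      funext fun i => ?_⟩
    conv_lhs => rw [hηξ, vecPow_mul_exp hξ]
    ring
  · rintro ⟨u, hu, rfl⟩
    obtain ⟨v, rfl⟩ := mem_rowSpace_iff.1 hu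
    refine ⟨hkK, _, fun l => mul_pos (hξ l) (Real.exp_pos (v l)), funext fun i => ?_⟩
    rw [vecPow_mul_exp hξ]
    ring

end IsMonomialParamExp

theorem multistationarity_iff_sign_condition_general {n r d s p : ℕ}
    (Y : Matrix (Fin n) (Fin r) ℕ) (S : Matrix (Fin n) (Fin r) ℝ)
    (A : Matrix (Fin (n - p)) (Fin n) ℚ) (K : Set (Fin r → ℝ))
    (ψ : (Fin r → ℝ) → (Fin n → ℝ)) (hparam : IsMonomialParamExp Y S p A K ψ)
    (E : Matrix (Fin r) (Fin d) ℝ) (hE : IsConeGenMatrix S E)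
    (hrow : ∀ j, ∃ l, E j l ≠ 0)
    (Z : Matrix (Fin (n - s)) (Fin n) ℝ) (hZ : IsConservationMatrix S s Z) :
    (∃ k ∈ K, ∃ a b : Fin n → ℝ, a ≠ b ∧
        (k, a) ∈ Vplus Y S ∧ (k, b) ∈ Vplus Y S ∧ Z.mulVec (b - a) = 0) ↔
      ({σ : Fin n → ℝ | ∃ u ∈ rowSpace A, σ = signVec u} ∩
        {σ : Fin n → ℝ | ∃ u ∈ colSpace S, σ = signVec u} ≠ {fun _ => 0}) := by
  rw [signVec_inter_ne_zero_iff]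
  constructor
  · rintro ⟨k, -, a, b, hab, ha, hb, hZab⟩
    obtain ⟨u, hu, rfl⟩ := (hparam.mem_Vplus_iff ha hb.2.1).1 hb
    refine ⟨u, hu, _, (hZ.mulVec_eq_zero_iff _).1 hZab, funext fun i => ?_, fun hu0 => hab ?_⟩
    · simp only [signVec, Pi.sub_apply, ← mul_sub_one,
        Real.sign_mul_of_pos (ha.2.1 i), Real.sign_exp_sub_one_s10]
    · simp [hu0]
  · rintro ⟨u, hu, w, hw, huw, hu0⟩
    choose a ha haw using fun i => Real.exists_pos_mul_exp_sub_one_eq (congrFun huw i).symm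
    obtain ⟨v, hv, hvpos⟩ := hE.exists_pos_mem_ker hrow
    obtain ⟨k, hka⟩ := exists_mem_Vplus_of_pos_mem_ker Y hv hvpos ha
    have hkb := (hparam.mem_Vplus_iff hka fun i => mul_pos (ha i) (Real.exp_pos (u i))).2
      ⟨u, hu, rfl⟩
    have hba : (fun i => a i * Real.exp (u i)) - a = w := funext fun i => by
      rw [Pi.sub_apply, ← haw i]
      ring
    refine ⟨k, hparam.mem_of_mem_Vplus hka, a, _, fun hab => hu0 ?_, hka, hkb, ?_⟩
    · rw [← signVec_eq_zero_iff, huw, signVec_eq_zero_iff, ← hba, ← hab, sub_self]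
    · rw [hba, hZ.mulVec_eq_zero_iff]
      exact hw

/-- multistationarity occurs iff sign(rs(A)) ∩ sign(im(S)) ≠ {0}. -/
theorem multistationarity_iff_sign_condition {n r d s p : ℕ} (hn : 1 ≤ n) (hr : 1 ≤ r)
    (Y : Matrix (Fin n) (Fin r) ℕ) (S : Matrix (Fin n) (Fin r) ℝ)
    (A : Matrix (Fin (n - p)) (Fin n) ℚ) (K : Set (Fin r → ℝ))
    (ψ : (Fin r → ℝ) → (Fin n → ℝ)) (hparam : IsMonomialParamExp Y S p A K ψ)
    (E : Matrix (Fin r) (Fin d) ℝ) (hE : IsConeGenMatrix S E)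
    (hrow : ∀ j, ∃ l, E j l ≠ 0)
    (Z : Matrix (Fin (n - s)) (Fin n) ℝ) (hZ : IsConservationMatrix S s Z) :
    (∃ k ∈ K, ∃ a b : Fin n → ℝ, a ≠ b ∧
        (k, a) ∈ Vplus Y S ∧ (k, b) ∈ Vplus Y S ∧ Z.mulVec (b - a) = 0) ↔
      ({σ : Fin n → ℝ | ∃ u ∈ rowSpace A, σ = signVec u} ∩
        {σ : Fin n → ℝ | ∃ u ∈ colSpace S, σ = signVec u} ≠ {fun _ => 0}) :=
  multistationarity_iff_sign_condition_general Y S A K ψ hparam E hE hrow Z hZ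
end
end

section
/- Assume V⁺ admits a monomial parametrization with exponent matrix A (data p, A, K, ψ). Let c ∈ im₊(Z). If there is no pair (a, ξ) with a ∈ ℝ_{>0}^n, ξ ∈ ℝ_{>0}^{n−p}, ξ ≠ 𝟙 and Z(a⋆ξ^A) = c, then there exist no k ∈ K and no α > 0 such that the equation Z(ψ(k)⋆ξ^A) = αc has at least two distinct solutions ξ₁ ≠ ξ₂ ∈ ℝ_{>0}^{n−p}. -/
open Matrix

noncomputable section

/-
Two solutions on the same ray differ by the monomial factor `(ξ₂ / ξ₁)^A`, so rescaling the first
one by `α⁻¹` turns the pair into a solution `Z (a ⋆ ξ^A) = c` with `ξ = ξ₂ / ξ₁ ≠ 𝟙`.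
-/

theorem vecPow_pos {q m : ℕ} {ξ : Fin q → ℝ} (hξ : ∀ l, 0 < ξ l) (B : Matrix (Fin q) (Fin m) ℚ)
    (j : Fin m) : 0 < vecPow ξ B j :=
  Finset.prod_pos fun l _ => Real.rpow_pos_of_pos (hξ l) _

theorem vecPow_div {q m : ℕ} {ξ η : Fin q → ℝ} (hξ : ∀ l, 0 ≤ ξ l) (hη : ∀ l, 0 ≤ η l)
    (B : Matrix (Fin q) (Fin m) ℚ) : vecPow (ξ / η) B = vecPow ξ B / vecPow η B := by
  funext j
  simp only [vecPow, Pi.div_apply, ← Finset.prod_div_distrib]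
  exact Finset.prod_congr rfl fun l _ => Real.div_rpow (hξ l) (hη l) _

theorem mul_vecPow_div_cancel {q m : ℕ} (b : Fin m → ℝ) (B : Matrix (Fin q) (Fin m) ℚ)
    {ξ₁ ξ₂ : Fin q → ℝ} (hξ₁ : ∀ l, 0 < ξ₁ l) (hξ₂ : ∀ l, 0 ≤ ξ₂ l) :
    b * vecPow ξ₁ B * vecPow (ξ₂ / ξ₁) B = b * vecPow ξ₂ B := by
  rw [vecPow_div hξ₂ fun l => (hξ₁ l).le]
  funext j
  have := (vecPow_pos hξ₁ B j).ne'
  simp only [Pi.mul_apply, Pi.div_apply]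
  field_simp

theorem no_multistationarity_on_ray_general {n r s p : ℕ}
    (Y : Matrix (Fin n) (Fin r) ℕ) (S : Matrix (Fin n) (Fin r) ℝ)
    (A : Matrix (Fin (n - p)) (Fin n) ℚ) (K : Set (Fin r → ℝ))
    (ψ : (Fin r → ℝ) → (Fin n → ℝ)) (hparam : IsMonomialParamExp Y S p A K ψ)
    (Z : Matrix (Fin (n - s)) (Fin n) ℝ)
    (c : Fin (n - s) → ℝ)
    (h : ¬ ∃ a : Fin n → ℝ, (∀ i, 0 < a i) ∧ ∃ ξ : Fin (n - p) → ℝ, (∀ l, 0 < ξ l) ∧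
      ξ ≠ (fun _ => 1) ∧ Z.mulVec (fun i => a i * vecPow ξ A i) = c) :
    ¬ ∃ k ∈ K, ∃ α : ℝ, 0 < α ∧
      ∃ ξ₁ ξ₂ : Fin (n - p) → ℝ, (∀ l, 0 < ξ₁ l) ∧ (∀ l, 0 < ξ₂ l) ∧ ξ₁ ≠ ξ₂ ∧
        Z.mulVec (fun i => ψ k i * vecPow ξ₁ A i) = α • c ∧
        Z.mulVec (fun i => ψ k i * vecPow ξ₂ A i) = α • c := by
  rintro ⟨k, hk, α, hα, ξ₁, ξ₂, hξ₁, hξ₂, hne, -, h₂⟩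
  have hψ : ∀ i, 0 < ψ k i := hparam.2.2.2.1 k hk
  refine h ⟨α⁻¹ • (ψ k * vecPow ξ₁ A),
    fun i => mul_pos (inv_pos.2 hα) (mul_pos (hψ i) (vecPow_pos hξ₁ A i)),
    ξ₂ / ξ₁, fun l => div_pos (hξ₂ l) (hξ₁ l), ?_, ?_⟩
  · intro h₁
    exact hne (funext fun l => ((div_eq_one_iff_eq (hξ₁ l).ne').mp (congrFun h₁ l)).symm)
  · change Z *ᵥ (ψ k * vecPow ξ₂ A) = α • c at h₂
    calc Z *ᵥ (α⁻¹ • (ψ k * vecPow ξ₁ A) * vecPow (ξ₂ / ξ₁) A)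
        = α⁻¹ • Z *ᵥ (ψ k * vecPow ξ₂ A) := by
          rw [smul_mul_assoc, mul_vecPow_div_cancel _ A hξ₁ fun l => (hξ₂ l).le, mulVec_smul]
      _ = c := by rw [h₂, inv_smul_smul₀ hα.ne']

/-- exclusion of multistationarity on an entire ray in the space of total
concentrations. -/
theorem no_multistationarity_on_ray {n r s p : ℕ} (hn : 1 ≤ n) (hr : 1 ≤ r)
    (Y : Matrix (Fin n) (Fin r) ℕ) (S : Matrix (Fin n) (Fin r) ℝ)
    (A : Matrix (Fin (n - p)) (Fin n) ℚ) (K : Set (Fin r → ℝ))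
    (ψ : (Fin r → ℝ) → (Fin n → ℝ)) (hparam : IsMonomialParamExp Y S p A K ψ)
    (Z : Matrix (Fin (n - s)) (Fin n) ℝ) (hZ : IsConservationMatrix S s Z)
    (c : Fin (n - s) → ℝ) (hc : c ∈ imPos Z)
    (h : ¬ ∃ a : Fin n → ℝ, (∀ i, 0 < a i) ∧ ∃ ξ : Fin (n - p) → ℝ, (∀ l, 0 < ξ l) ∧
      ξ ≠ (fun _ => 1) ∧ Z.mulVec (fun i => a i * vecPow ξ A i) = c) :
    ¬ ∃ k ∈ K, ∃ α : ℝ, 0 < α ∧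
      ∃ ξ₁ ξ₂ : Fin (n - p) → ℝ, (∀ l, 0 < ξ₁ l) ∧ (∀ l, 0 < ξ₂ l) ∧ ξ₁ ≠ ξ₂ ∧
        Z.mulVec (fun i => ψ k i * vecPow ξ₁ A i) = α • c ∧
        Z.mulVec (fun i => ψ k i * vecPow ξ₂ A i) = α • c :=
  no_multistationarity_on_ray_general Y S A K ψ hparam Z c h
end
end
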